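/- Let T = ([p], E) be a tree and e = u − v a non-leaf edge of T (both u and v have degree at least 2 in T). Let T_u and T_v be the two subtrees obtained by deleting e and adding e back to the components containing u and v respectively. Let Q be the set of all partings parting(𝒯, e) = (𝒯_u, 𝒯_v) of Markov equivalence classes 𝒯 of DAGs with skeleton T, viewed as a subset of the product of the sets of Markov equivalence classes with skeletons T_u and T_v. Then I_T = I_{T_u} ×_Q I_{T_v}, i.e., I_T = φ_Q^{-1}(I_{T_u} + I_{T_v}). -/

import Mathlib

open MvPolynomial

/-- A directed acyclic graph on the vertex set `Fin p`: `edge i j` means `i → j`. -/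
structure DAG (p : ℕ) where
  edge : Fin p → Fin p → Prop
  acyclic : ∀ i, ¬ Relation.TransGen edge i i

/-- The skeleton of a DAG: its underlying undirected graph. -/
def DAG.skeleton {p : ℕ} (D : DAG p) : SimpleGraph (Fin p) where
  Adj i j := D.edge i j ∨ D.edge j i
  symm := ⟨fun _ _ h => h.symm⟩
  loopless := ⟨fun i h => D.acyclic i (Relation.TransGen.single (h.elim id id))⟩

/-- The characteristic imset of a DAG: `c_𝒢(S) = 1` iff `|S| ≥ 2` and there is an
`i ∈ S` with `S \ {i} ⊆ pa_𝒢(i)`. -/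
def DAG.cim {p : ℕ} (D : DAG p) (S : Finset (Fin p)) : Prop :=
  2 ≤ S.card ∧ ∃ i ∈ S, ∀ j ∈ S, j ≠ i → D.edge j i

/-- The restriction of a DAG to (the edges of) an undirected graph `H`. -/
def DAG.restrict {p : ℕ} (D : DAG p) (H : SimpleGraph (Fin p)) : DAG p where
  edge i j := D.edge i j ∧ H.Adj i j
  acyclic i h := D.acyclic i ((show ∀ a b, Relation.TransGen (fun i j => D.edge i j ∧ H.Adj i j) a b →
      Relation.TransGen D.edge a b from fun a b hh => by
        induction hh with
        | single hab => exact Relation.TransGen.single hab.1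
        | tail _ hab ih => exact Relation.TransGen.tail ih hab.1) i i h)

/-- The set of characteristic imsets of DAGs with skeleton `G`; it is in bijection
with the set of Markov equivalence classes of DAGs with skeleton `G`. -/
def imsets (p : ℕ) (G : SimpleGraph (Fin p)) : Set (Finset (Fin p) → Prop) :=
  { c | ∃ D : DAG p, D.skeleton = G ∧ c = D.cim }

open scoped Classical in
/-- The monomial map `ψ_G` of the characteristic imset ideal. -/
noncomputable def psiG (K : Type*) [Field K] (p : ℕ) (G : SimpleGraph (Fin p)) :
    MvPolynomial (imsets p G) K →ₐ[K] MvPolynomial (Finset (Fin p)) K :=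
  aeval fun c => ∏ S ∈ Finset.univ.filter (fun S => c.1 S), X S

/-- The characteristic imset ideal `I_G = ker ψ_G`. -/
noncomputable def cimIdeal (K : Type*) [Field K] (p : ℕ) (G : SimpleGraph (Fin p)) :
    Ideal (MvPolynomial (imsets p G) K) :=
  RingHom.ker (psiG K p G)

/-- For an edge `u - v` of `T`, the subgraph `T_u` of `T` consisting of the connected
component of `u` in `T` minus the edge `u - v`, together with the edge `u - v`. -/
def Tside {p : ℕ} (T : SimpleGraph (Fin p)) (u v : Fin p) : SimpleGraph (Fin p) where
  Adj a b := T.Adj a b ∧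
    (((T.deleteEdges {s(u, v)}).Reachable u a ∧ (T.deleteEdges {s(u, v)}).Reachable u b)
      ∨ (a = u ∧ b = v) ∨ (a = v ∧ b = u))
  symm := by
    constructor
    intro a b h
    refine ⟨h.1.symm, ?_⟩
    rcases h.2 with h' | h' | h'
    · exact Or.inl ⟨h'.2, h'.1⟩
    · exact Or.inr (Or.inr ⟨h'.2, h'.1⟩)
    · exact Or.inr (Or.inl ⟨h'.2, h'.1⟩)
  loopless := ⟨fun a h => T.irrefl h.1⟩

/-- The set `Q` of all partings of Markov equivalence classes with skeleton `T` at the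
edge `e = u - v`: the parting of the class of a DAG `D` is the pair of classes of the
restrictions of `D` to `T_u` and to `T_v` (equivalently, the pair of induced patterns
with the orientation of `e` forgotten whenever it is not part of a v-structure on the
corresponding side). -/
def partingSet {p : ℕ} (T : SimpleGraph (Fin p)) (u v : Fin p) :
    Set (↥(imsets p (Tside T u v)) × ↥(imsets p (Tside T v u))) :=
  { q | ∃ D : DAG p, D.skeleton = T ∧
      (q.1 : Finset (Fin p) → Prop) = (D.restrict (Tside T u v)).cim ∧
      (q.2 : Finset (Fin p) → Prop) = (D.restrict (Tside T v u)).cim }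

/-- The quasi-independence monomial map `φ_Q`, `z_{jk} ↦ x_j y_k`. -/
noncomputable def phiQ (K : Type*) [Field K] {σ τ : Type*} (Q : Set (σ × τ)) :
    MvPolynomial Q K →ₐ[K] MvPolynomial (σ ⊕ τ) K :=
  aeval fun q => X (Sum.inl q.1.1) * X (Sum.inr q.1.2)

/-- The quasi-independence gluing `I ×_Q J := φ_Q⁻¹(I + J)`. -/
noncomputable def QIG (K : Type*) [Field K] {σ τ : Type*} (Q : Set (σ × τ))
    (I : Ideal (MvPolynomial σ K)) (J : Ideal (MvPolynomial τ K)) :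
    Ideal (MvPolynomial Q K) :=
  Ideal.comap (phiQ K Q)
    (Ideal.map (rename (Sum.inl : σ → σ ⊕ τ)) I +
      Ideal.map (rename (Sum.inr : τ → σ ⊕ τ)) J)

-- ### graph side predicates

/-- `x` is on the `u`-side of the edge `u - v`. -/
def Vside {p : ℕ} (T : SimpleGraph (Fin p)) (u v x : Fin p) : Prop :=
  (T.deleteEdges {s(u, v)}).Reachable u x

/-- the predicate `P_u` on sets -/
def sideP {p : ℕ} (T : SimpleGraph (Fin p)) (u v : Fin p) (S : Finset (Fin p)) : Prop :=
  (∀ x ∈ S, Vside T u v x ∨ x = v) ∧ (v ∈ S → u ∈ S)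

variable {p : ℕ} {T : SimpleGraph (Fin p)} {u v : Fin p}

lemma Vside_symm_edge (x : Fin p) : Vside T v u x ↔ (T.deleteEdges {s(u, v)}).Reachable v x := by
  rw [Vside, Sym2.eq_swap]

lemma Vside_not_both (hT : T.IsTree) (huv : T.Adj u v) {x : Fin p}
    (h1 : Vside T u v x) (h2 : Vside T v u x) : False := by
  have hb : T.IsBridge s(u, v) :=
    (SimpleGraph.isAcyclic_iff_forall_adj_isBridge.mp hT.2) huv
  rw [Vside_symm_edge] at h2
  exact hb (h1.trans h2.symm)

lemma Vside_refl (x : Fin p) : Vside T x v x := SimpleGraph.Reachable.refl _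

lemma Vside_step {y z : Fin p} (hadj : T.Adj y z) (hne : ¬ (s(y, z) = s(u, v)))
    (hy : Vside T u v y) : Vside T u v z := by
  refine hy.trans (SimpleGraph.Adj.reachable ?_)
  rw [SimpleGraph.deleteEdges_adj]
  exact ⟨hadj, by simpa using hne⟩

lemma Vside_walk : ∀ {y x : Fin p}, T.Walk y x →
    (Vside T u v y ∨ Vside T v u y) → (Vside T u v x ∨ Vside T v u x) := by
  intro y x W
  induction W with
  | nil => exact id
  | @cons a b c hadj _ ih =>
      intro ha
      refine ih ?_
      by_cases he : s(a, b) = s(u, v)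
      · rcases Sym2.eq_iff.mp he with ⟨rfl, rfl⟩ | ⟨rfl, rfl⟩
        · exact Or.inr (Vside_refl _)
        · exact Or.inl (Vside_refl _)
      · rcases ha with ha | ha
        · exact Or.inl (Vside_step hadj he ha)
        · refine Or.inr (Vside_step hadj ?_ ha)
          rw [Sym2.eq_swap (a := u) (b := v)] at he
          exact he

lemma Vside_total (hT : T.IsTree) (x : Fin p) :
    Vside T u v x ∨ Vside T v u x := by
  obtain ⟨W⟩ := hT.1.preconnected u x
  exact Vside_walk W (Or.inl (Vside_refl _))

lemma edge_adj {D : DAG p} (hsk : D.skeleton = T) {a b : Fin p} (h : D.edge a b) :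
    T.Adj a b := by rw [← hsk]; exact Or.inl h

lemma Vside_v (hT : T.IsTree) (huv : T.Adj u v) (h : Vside T u v v) : False :=
  Vside_not_both hT huv h (Vside_refl v)

/-- a `T`-neighbor of `v` on the `u`-side must be `u` itself -/
lemma adj_v_side (hT : T.IsTree) (huv : T.Adj u v) {j : Fin p}
    (hadj : T.Adj j v) (hj : Vside T u v j) : j = u := by
  by_cases he : s(j, v) = s(u, v)
  · rcases Sym2.eq_iff.mp he with ⟨rfl, _⟩ | ⟨rfl, rfl⟩
    · rfl
    · exact absurd hj (fun h => Vside_v hT huv h)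
  · exact absurd (Vside_step hadj he hj) (fun h => Vside_v hT huv h)

lemma restrict_cim_iff (hT : T.IsTree) (huv : T.Adj u v) {D : DAG p}
    (hsk : D.skeleton = T) (S : Finset (Fin p)) :
    (D.restrict (Tside T u v)).cim S ↔ D.cim S ∧ sideP T u v S := by
  constructor
  · rintro ⟨hcard, i, hiS, hpa⟩
    refine ⟨⟨hcard, i, hiS, fun j hj hne => (hpa j hj hne).1⟩, ?_⟩
    obtain ⟨j0, hj0S, hj0ne⟩ := Finset.exists_mem_ne (s := S) (by omega) i
    by_cases hiv : i = v
    · have hSuv : ∀ j ∈ S, j ≠ i → j = u := by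
        intro j hj hne
        rcases (hpa j hj hne).2.2 with ⟨_, hVv⟩ | ⟨h1, _⟩ | ⟨h1, _⟩
        · exact absurd (hiv ▸ hVv) (fun h => Vside_v hT huv h)
        · exact h1
        · exact absurd (h1.trans hiv.symm) hne
      refine ⟨fun x hx => ?_, fun _ => ?_⟩
      · by_cases hxv : x = i
        · exact Or.inr (hxv.trans hiv)
        · rw [hSuv x hx hxv]; exact Or.inl (Vside_refl u)
      · rw [← hSuv j0 hj0S hj0ne]; exact hj0S
    · have hVui : Vside T u v i := by
        rcases (hpa j0 hj0S hj0ne).2.2 with ⟨_, h2⟩ | ⟨_, h2⟩ | ⟨_, h2⟩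
        · exact h2
        · exact absurd h2 hiv
        · rw [h2]; exact Vside_refl u
      refine ⟨fun x hx => ?_, fun hvS => ?_⟩
      · by_cases hxi : x = i
        · exact Or.inl (hxi ▸ hVui)
        · rcases (hpa x hx hxi).2.2 with ⟨h1, _⟩ | ⟨h1, _⟩ | ⟨h1, _⟩
          · exact Or.inl h1
          · rw [h1]; exact Or.inl (Vside_refl u)
          · exact Or.inr h1
      · have hvne : v ≠ i := fun h => hiv h.symm
        rcases (hpa v hvS hvne).2.2 with ⟨h1, _⟩ | ⟨h1, _⟩ | ⟨_, h2⟩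
        · exact absurd h1 (fun h => Vside_v hT huv h)
        · exact absurd h1.symm huv.ne
        · exact h2 ▸ hiS
  · rintro ⟨⟨hcard, i, hiS, hpa⟩, hsub, himp⟩
    refine ⟨hcard, i, hiS, fun j hj hne => ⟨hpa j hj hne, ?_⟩⟩
    have hTadj : T.Adj j i := edge_adj hsk (hpa j hj hne)
    refine ⟨hTadj, ?_⟩
    rcases hsub j hj with hVj | rfl
    · rcases hsub i hiS with hVi | rfl
      · exact Or.inl ⟨hVj, hVi⟩
      · exact Or.inr (Or.inl ⟨adj_v_side hT huv hTadj hVj, rfl⟩)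
    · rcases hsub i hiS with hVi | hiv
      · exact Or.inr (Or.inr ⟨rfl, adj_v_side hT huv hTadj.symm hVi⟩)
      · exact absurd hiv.symm hne

lemma cim_sideP_aux (hT : T.IsTree) (huv : T.Adj u v) {S : Finset (Fin p)} {i : Fin p}
    (hiS : i ∈ S) (hN : ∀ j ∈ S, j ≠ i → T.Adj j i) (hVi : Vside T u v i) :
    sideP T u v S := by
  have hall : ∀ x ∈ S, x ≠ i → x ≠ v → Vside T u v x := by
    intro x hx hxi hxv
    refine Vside_step (hN x hx hxi).symm ?_ hVi
    intro he
    rcases Sym2.eq_iff.mp he with ⟨_, h2⟩ | ⟨h1, _⟩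
    · exact hxv h2
    · exact Vside_v hT huv (h1 ▸ hVi)
  have hiv : i ≠ v := fun h => Vside_v hT huv (h ▸ hVi)
  refine ⟨fun x hx => ?_, fun hvS => ?_⟩
  · by_cases hxv : x = v
    · exact Or.inr hxv
    · by_cases hxi : x = i
      · exact Or.inl (hxi ▸ hVi)
      · exact Or.inl (hall x hx hxi hxv)
  · have hadj : T.Adj i v := (hN v hvS (fun h => hiv h.symm)).symm
    exact (adj_v_side hT huv hadj hVi) ▸ hiS

lemma cim_sideP (hT : T.IsTree) (huv : T.Adj u v) {D : DAG p}
    (hsk : D.skeleton = T) {S : Finset (Fin p)} (h : D.cim S) :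
    sideP T u v S ∨ sideP T v u S := by
  obtain ⟨hcard, i, hiS, hpa⟩ := h
  have hN : ∀ j ∈ S, j ≠ i → T.Adj j i := fun j hj hne => edge_adj hsk (hpa j hj hne)
  rcases Vside_total (u := u) (v := v) hT i with hVi | hVi
  · exact Or.inl (cim_sideP_aux hT huv hiS hN hVi)
  · exact Or.inr (cim_sideP_aux hT huv.symm hiS hN hVi)

lemma sideP_both (hT : T.IsTree) (huv : T.Adj u v) {S : Finset (Fin p)}
    (h1 : sideP T u v S) (h2 : sideP T v u S) (hcard : 2 ≤ S.card) : S = {u, v} := by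
  have hsub : S ⊆ {u, v} := by
    intro x hx
    rcases h1.1 x hx with hVx | rfl
    · rcases h2.1 x hx with hVx' | rfl
      · exact absurd hVx (fun h => Vside_not_both hT huv h hVx')
      · simp
    · simp
  exact (Finset.eq_of_subset_of_card_le hsub
    (by rw [Finset.card_pair huv.ne]; exact hcard))

lemma sideP_pair (huv : T.Adj u v) : sideP T u v {u, v} := by
  refine ⟨fun x hx => ?_, fun _ => Finset.mem_insert_self u {v}⟩
  rcases Finset.mem_insert.mp hx with rfl | hx
  · exact Or.inl (Vside_refl x)
  · exact Or.inr (Finset.mem_singleton.mp hx)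


section AlgebraAux
variable {K : Type*} [Field K]

lemma prod_monomial_one {ι χ : Type*} (A : Finset ι) (φ : ι → (χ →₀ ℕ)) :
    (∏ i ∈ A, (monomial (φ i) (1 : K))) = monomial (∑ i ∈ A, φ i) 1 := by
  classical
  induction A using Finset.induction_on with
  | empty => simp
  | @insert _ _ h ih =>
      rw [Finset.prod_insert h, ih, monomial_mul, one_mul, Finset.sum_insert h]

lemma algHom_monomial_one {ρ χ : Type*} (Φ : MvPolynomial ρ K →ₐ[K] MvPolynomial χ K)
    (w : ρ → (χ →₀ ℕ)) (hw : ∀ s, Φ (X s) = monomial (w s) 1) (d : ρ →₀ ℕ) :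
    Φ (monomial d 1) = monomial (d.sum fun s n => n • w s) 1 := by
  classical
  rw [monomial_eq, map_mul, map_finsuppProd]
  simp only [map_pow, hw, map_one, C_1, one_mul]
  simp only [monomial_pow, one_pow]
  rw [Finsupp.prod, Finsupp.sum, prod_monomial_one]

lemma span_binomials {ρ χ : Type*} (Φ : MvPolynomial ρ K →ₐ[K] MvPolynomial χ K)
    (w : (ρ →₀ ℕ) → (χ →₀ ℕ)) (hw : ∀ d, Φ (monomial d 1) = monomial (w d) 1)
    {f : MvPolynomial ρ K} (hf : Φ f = 0) :
    f ∈ Submodule.span K {g : MvPolynomial ρ K |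
      ∃ a b : ρ →₀ ℕ, w a = w b ∧ g = monomial a (1:K) - monomial b 1} := by
  classical
  generalize hn : f.support.card = n
  induction n using Nat.strong_induction_on generalizing f with
  | _ n ih =>
  rcases eq_or_ne f 0 with rfl | hf0
  · exact Submodule.zero_mem _
  obtain ⟨a, ha⟩ := (MvPolynomial.support_nonempty.mpr hf0)
  have key : ∀ m : χ →₀ ℕ,
      (∑ d ∈ f.support.filter fun d => w d = m, coeff d f) = coeff m (Φ f) := by
    intro m
    conv_rhs => rw [f.as_sum]
    rw [map_sum, MvPolynomial.coeff_sum]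
    rw [Finset.sum_filter]
    refine Finset.sum_congr rfl ?_
    intro d _
    have : (monomial d (coeff d f)) = coeff d f • monomial d (1:K) := by
      rw [smul_monomial, smul_eq_mul, mul_one]
    rw [this, map_smul, hw, coeff_smul, coeff_monomial]
    by_cases hdm : w d = m
    · rw [if_pos hdm, if_pos hdm, smul_eq_mul, mul_one]
    · rw [if_neg hdm, if_neg hdm, smul_eq_mul, mul_zero]
  have hsum : (∑ d ∈ f.support.filter fun d => w d = w a, coeff d f) = 0 := by
    rw [key, hf, coeff_zero]
  have hamem : a ∈ f.support.filter fun d => w d = w a :=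
    Finset.mem_filter.mpr ⟨ha, rfl⟩
  have hex : ∃ b ∈ f.support.filter fun d => w d = w a, b ≠ a := by
    by_contra hcon
    push_neg at hcon
    have : (f.support.filter fun d => w d = w a) = {a} := by
      apply Finset.eq_singleton_iff_unique_mem.mpr
      exact ⟨hamem, hcon⟩
    rw [this, Finset.sum_singleton] at hsum
    exact (MvPolynomial.mem_support_iff.mp ha) hsum
  obtain ⟨b, hbmem, hba⟩ := hex
  have hwba : w b = w a := (Finset.mem_filter.mp hbmem).2
  have hbs : b ∈ f.support := (Finset.mem_filter.mp hbmem).1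
  set g := f - coeff a f • (monomial a (1:K) - monomial b 1) with hgdef
  have hcoeffg : ∀ x, coeff x g =
      coeff x f - coeff a f * ((if a = x then (1:K) else 0) - if b = x then 1 else 0) := by
    intro x
    rw [hgdef, coeff_sub, coeff_smul, coeff_sub, coeff_monomial, coeff_monomial, smul_eq_mul]
  have hsupg : g.support ⊆ f.support.erase a := by
    intro x hx
    have hxg : coeff x g ≠ 0 := MvPolynomial.mem_support_iff.mp hx
    rw [hcoeffg] at hxg
    rcases eq_or_ne x a with rfl | hxa
    · rw [if_pos rfl, if_neg hba] at hxg
      simp at hxg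
    · refine Finset.mem_erase.mpr ⟨hxa, ?_⟩
      by_contra hxs
      have hcx : coeff x f = 0 := MvPolynomial.notMem_support_iff.mp hxs
      have hxb : x ≠ b := fun h => hxs (h ▸ hbs)
      rw [hcx, if_neg (fun h => hxa h.symm), if_neg (fun h => hxb h.symm)] at hxg
      simp at hxg
  have hgker : Φ g = 0 := by
    rw [hgdef, map_sub, map_smul, map_sub, hw, hw, hwba, sub_self, smul_zero, sub_zero, hf]
  have hcard : g.support.card < n := by
    have h1 : g.support.card ≤ (f.support.erase a).card := Finset.card_le_card hsupg
    have h2 : (f.support.erase a).card < f.support.card :=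
      Finset.card_erase_lt_of_mem ha
    omega
  have hgmem := ih g.support.card (by omega) hgker rfl
  have hfg : f = g + coeff a f • (monomial a (1:K) - monomial b 1) := by
    rw [hgdef]; ring
  rw [hfg]
  refine Submodule.add_mem _ hgmem (Submodule.smul_mem _ _ ?_)
  exact Submodule.subset_span ⟨a, b, hwba.symm, rfl⟩

lemma ker_le_ker {ρ χ₁ χ₂ : Type*} (Φ₁ : MvPolynomial ρ K →ₐ[K] MvPolynomial χ₁ K)
    (Φ₂ : MvPolynomial ρ K →ₐ[K] MvPolynomial χ₂ K)
    (w₁ : (ρ →₀ ℕ) → (χ₁ →₀ ℕ)) (w₂ : (ρ →₀ ℕ) → (χ₂ →₀ ℕ))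
    (hw₁ : ∀ d, Φ₁ (monomial d 1) = monomial (w₁ d) 1)
    (hw₂ : ∀ d, Φ₂ (monomial d 1) = monomial (w₂ d) 1)
    (hcmp : ∀ a b, w₁ a = w₁ b → w₂ a = w₂ b)
    {f : MvPolynomial ρ K} (hf : Φ₁ f = 0) : Φ₂ f = 0 := by
  have hs := span_binomials Φ₁ w₁ hw₁ hf
  have hle : Submodule.span K {g : MvPolynomial ρ K |
      ∃ a b : ρ →₀ ℕ, w₁ a = w₁ b ∧ g = monomial a (1:K) - monomial b 1} ≤
      (RingHom.ker (Φ₂ : MvPolynomial ρ K →+* MvPolynomial χ₂ K)).restrictScalars K := by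
    rw [Submodule.span_le]
    rintro g ⟨a, b, hab, rfl⟩
    simp only [SetLike.mem_coe, Submodule.restrictScalars_mem, RingHom.mem_ker]
    rw [map_sub]
    show Φ₂ (monomial a 1) - Φ₂ (monomial b 1) = 0
    rw [hw₂, hw₂, hcmp a b hab, sub_self]
  exact RingHom.mem_ker.mp (hle hs)

end AlgebraAux

section Spec

open Finsupp

/-- Extend `ι`-indexed exponent data additively to `ι →₀ ℕ`. -/
noncomputable def expHom {ι N : Type*} [AddCommMonoid N] (z : ι → N) : (ι →₀ ℕ) →+ N :=
  Finsupp.liftAddHom fun c =>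
    AddMonoidHom.mk ⟨fun n => n • z c, zero_nsmul (z c)⟩ (fun m n => add_nsmul (z c) m n)

lemma expHom_single {ι N : Type*} [AddCommMonoid N] (z : ι → N) (c : ι) (n : ℕ) :
    expHom z (Finsupp.single c n) = n • z c := by
  simp [expHom]

lemma expHom_apply {ι N : Type*} [AddCommMonoid N] (z : ι → N) (d : ι →₀ ℕ) :
    expHom z d = d.sum fun c n => n • z c := by
  rw [expHom, Finsupp.liftAddHom_apply]
  rfl

lemma expHom_comp {ι N N' : Type*} [AddCommMonoid N] [AddCommMonoid N']
    (z : ι → N) (g : N →+ N') : g.comp (expHom z) = expHom (fun c => g (z c)) := by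
  apply Finsupp.addHom_ext
  intro c n
  simp only [AddMonoidHom.coe_comp, Function.comp_apply, expHom_single, map_nsmul]

lemma algHom_monomial_exp {K : Type*} [Field K] {ρ χ : Type*}
    (Φ : MvPolynomial ρ K →ₐ[K] MvPolynomial χ K)
    (w : ρ → (χ →₀ ℕ)) (hw : ∀ s, Φ (X s) = monomial (w s) 1) (d : ρ →₀ ℕ) :
    Φ (monomial d 1) = monomial (expHom w d) 1 := by
  rw [algHom_monomial_one Φ w hw d, expHom_apply]

open scoped Classical in
/-- the exponent vector attached to an imset `c` -/
noncomputable def wF (p : ℕ) (c : Finset (Fin p) → Prop) : Finset (Fin p) →₀ ℕ :=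
  ∑ S ∈ Finset.univ.filter (fun S => c S), Finsupp.single S 1

/-- the exponent vector of the image of the variable `z_c` under `ψ_G` -/
noncomputable def wG (p : ℕ) (G : SimpleGraph (Fin p)) (c : ↥(imsets p G)) :
    Finset (Fin p) →₀ ℕ :=
  wF p c.1

lemma psiG_X (K : Type*) [Field K] (p : ℕ) (G : SimpleGraph (Fin p)) (c : ↥(imsets p G)) :
    psiG K p G (X c) = monomial (wG p G c) 1 := by
  rw [psiG, aeval_X, wG, wF, ← prod_monomial_one]
  rfl

end Spec

section Spec2

open Finsupp

variable {p : ℕ} {T : SimpleGraph (Fin p)} {u v : Fin p}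

open scoped Classical

/-- projection of exponents onto the `u`-side -/
noncomputable def MuHom (T : SimpleGraph (Fin p)) (u v : Fin p) :
    (Finset (Fin p) →₀ ℕ) →+ (Finset (Fin p) →₀ ℕ) :=
  Finsupp.liftAddHom fun S => if sideP T u v S then Finsupp.singleAddHom S else 0

/-- recombination of two-sided exponents -/
noncomputable def MprimeHom (u v : Fin p) :
    ((Finset (Fin p) ⊕ Finset (Fin p)) →₀ ℕ) →+ (Finset (Fin p) →₀ ℕ) :=
  Finsupp.liftAddHom fun x =>
    Sum.elim (fun S => Finsupp.singleAddHom S)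
      (fun S => if S = {u, v} then 0 else Finsupp.singleAddHom S) x

lemma MuHom_single (S : Finset (Fin p)) (n : ℕ) :
    MuHom T u v (single S n) = if sideP T u v S then single S n else 0 := by
  rw [MuHom, liftAddHom_apply_single]
  by_cases h : sideP T u v S
  · rw [if_pos h, if_pos h]; rfl
  · rw [if_neg h, if_neg h]; rfl

lemma Mprime_single_inl (S : Finset (Fin p)) (n : ℕ) :
    MprimeHom u v (single (Sum.inl S) n) = single S n := by
  rw [MprimeHom, liftAddHom_apply_single]; rfl

lemma Mprime_single_inr (S : Finset (Fin p)) (n : ℕ) :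
    MprimeHom u v (single (Sum.inr S) n) =
      if S = {u, v} then 0 else single S n := by
  rw [MprimeHom, liftAddHom_apply_single]
  by_cases h : S = {u, v}
  · rw [Sum.elim_inr, if_pos h, if_pos h]; rfl
  · rw [Sum.elim_inr, if_neg h, if_neg h]; rfl

lemma MuHom_wF (hT : T.IsTree) (huv : T.Adj u v) {D : DAG p} (hsk : D.skeleton = T) :
    MuHom T u v (wF p D.cim) = wF p (D.restrict (Tside T u v)).cim := by
  rw [wF, wF, map_sum]
  calc (∑ S ∈ Finset.univ.filter (fun S => D.cim S), MuHom T u v (Finsupp.single S 1))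
      = ∑ S ∈ Finset.univ.filter (fun S => D.cim S),
          (if sideP T u v S then Finsupp.single S 1 else 0) :=
        Finset.sum_congr rfl (fun S _ => MuHom_single S 1)
    _ = ∑ S ∈ (Finset.univ.filter (fun S => D.cim S)).filter (fun S => sideP T u v S),
          Finsupp.single S 1 := (Finset.sum_filter _ _).symm
    _ = ∑ S ∈ Finset.univ.filter (fun S => (D.restrict (Tside T u v)).cim S),
          Finsupp.single S 1 := by
        rw [Finset.filter_filter]
        exact Finset.sum_congr
          (Finset.filter_congr (fun S _ => (restrict_cim_iff hT huv hsk S).symm)) (fun _ _ => rfl)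

lemma Mprime_w2 (hT : T.IsTree) (huv : T.Adj u v) {D : DAG p} (hsk : D.skeleton = T) :
    MprimeHom u v ((wF p (D.restrict (Tside T u v)).cim).mapDomain Sum.inl
        + (wF p (D.restrict (Tside T v u)).cim).mapDomain Sum.inr)
      = wF p D.cim := by
  have hfilu : Finset.univ.filter (fun S => (D.restrict (Tside T u v)).cim S)
      = (Finset.univ.filter (fun S => D.cim S)).filter (fun S => sideP T u v S) := by
    rw [Finset.filter_filter]
    exact Finset.filter_congr (fun S _ => restrict_cim_iff hT huv hsk S)
  have hfilv : Finset.univ.filter (fun S => (D.restrict (Tside T v u)).cim S)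
      = (Finset.univ.filter (fun S => D.cim S)).filter (fun S => sideP T v u S) := by
    rw [Finset.filter_filter]
    exact Finset.filter_congr (fun S _ => restrict_cim_iff hT huv.symm hsk S)
  rw [wF, wF, wF, hfilu, hfilv, Finsupp.mapDomain_finset_sum, Finsupp.mapDomain_finset_sum,
    map_add, map_sum, map_sum]
  simp only [Finsupp.mapDomain_single, Mprime_single_inl, Mprime_single_inr]
  have e1 : (∑ S ∈ (Finset.univ.filter (fun S => D.cim S)).filter (fun S => sideP T u v S),
      Finsupp.single S (1:ℕ))
      = ∑ S ∈ Finset.univ.filter (fun S => D.cim S),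
          (if sideP T u v S then Finsupp.single S 1 else 0) := Finset.sum_filter _ _
  have e2 : (∑ S ∈ (Finset.univ.filter (fun S => D.cim S)).filter (fun S => sideP T v u S),
      (if S = {u, v} then 0 else Finsupp.single S (1:ℕ)))
      = ∑ S ∈ Finset.univ.filter (fun S => D.cim S),
          (if sideP T v u S then (if S = {u, v} then 0 else Finsupp.single S 1) else 0) :=
    Finset.sum_filter _ _
  rw [e1, e2, ← Finset.sum_add_distrib]
  refine Finset.sum_congr rfl ?_
  intro S hS
  have hDS : D.cim S := (Finset.mem_filter.mp hS).2
  by_cases hSuv : S = {u, v}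
  · subst hSuv
    rw [if_pos (sideP_pair huv)]
    have h0 : (if sideP T v u {u, v}
        then (if ({u, v} : Finset (Fin p)) = {u, v} then (0 : Finset (Fin p) →₀ ℕ)
          else Finsupp.single {u, v} 1) else 0) = 0 := by simp
    rw [h0, add_zero]
  · rcases cim_sideP hT huv hsk hDS with h1 | h1
    · have h2 : ¬ sideP T v u S := fun h2 => hSuv (sideP_both hT huv h1 h2 hDS.1)
      rw [if_pos h1, if_neg h2, add_zero]
    · by_cases h2 : sideP T u v S
      · exact absurd (sideP_both hT huv h2 h1 hDS.1) hSuv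
      · rw [if_neg h2, if_pos h1, if_neg hSuv, zero_add]

end Spec2
/-- for a tree `T` and a non-leaf edge `e = u - v`, the characteristic
imset ideal of `T` is the quasi-independence gluing of the ideals of `T_u` and `T_v`
along the set `Q` of partings: `I_T = I_{T_u} ×_Q I_{T_v}`, where the variables of
`I_T` are identified with the variables of the gluing via the parting map `π`. -/
theorem stmt12 (K : Type*) [Field K] (p : ℕ) (T : SimpleGraph (Fin p))
    (hT : T.IsTree) (u v : Fin p) (huv : T.Adj u v)
    (hu : 2 ≤ (T.neighborSet u).ncard) (hv : 2 ≤ (T.neighborSet v).ncard)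
    (π : ↥(imsets p T) → ↥(partingSet T u v))
    (hπ : ∀ (D : DAG p), D.skeleton = T → ∀ hc : D.cim ∈ imsets p T,
      ((π ⟨D.cim, hc⟩).1.1 : Finset (Fin p) → Prop) = (D.restrict (Tside T u v)).cim ∧
      ((π ⟨D.cim, hc⟩).1.2 : Finset (Fin p) → Prop) = (D.restrict (Tside T v u)).cim) :
    cimIdeal K p T =
      Ideal.comap (rename π)
        (QIG K (partingSet T u v)
          (cimIdeal K p (Tside T u v)) (cimIdeal K p (Tside T v u))) := by
  classical
  have huv' : T.Adj v u := huv.symm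
  -- data extracted from π
  have hdata : ∀ c : ↥(imsets p T), ∃ D : DAG p, D.skeleton = T ∧
      c.1 = D.cim ∧
      ((π c).1.1 : Finset (Fin p) → Prop) = (D.restrict (Tside T u v)).cim ∧
      ((π c).1.2 : Finset (Fin p) → Prop) = (D.restrict (Tside T v u)).cim := by
    intro c
    obtain ⟨D, hsk, hc⟩ := c.2
    have hc2 : D.cim ∈ imsets p T := ⟨D, hsk, rfl⟩
    have hceq : c = ⟨D.cim, hc2⟩ := Subtype.ext hc
    obtain ⟨h1, h2⟩ := hπ D hsk hc2
    exact ⟨D, hsk, hc, by rw [hceq]; exact h1, by rw [hceq]; exact h2⟩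
  -- the maps
  set F : MvPolynomial (↥(imsets p T)) K →ₐ[K]
      MvPolynomial ((↥(imsets p (Tside T u v))) ⊕ (↥(imsets p (Tside T v u)))) K :=
    (phiQ K (partingSet T u v)).comp (rename π) with hFdef
  set combine : MvPolynomial ((↥(imsets p (Tside T u v))) ⊕ (↥(imsets p (Tside T v u)))) K →ₐ[K]
      MvPolynomial ((Finset (Fin p)) ⊕ (Finset (Fin p))) K :=
    aeval (fun x => Sum.elim
      (fun s => rename (Sum.inl : Finset (Fin p) → _) (psiG K p (Tside T u v) (X s)))
      (fun t => rename (Sum.inr : Finset (Fin p) → _) (psiG K p (Tside T v u) (X t))) x)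
    with hcombdef
  -- variable images
  have hFX : ∀ c, F (X c) =
      X (Sum.inl (π c).1.1) * X (Sum.inr (π c).1.2) := by
    intro c
    rw [hFdef, AlgHom.comp_apply, rename_X, phiQ, aeval_X]
  have hcombX1 : ∀ s, combine (X (Sum.inl s)) =
      rename (Sum.inl : Finset (Fin p) → _) (psiG K p (Tside T u v) (X s)) := by
    intro s; rw [hcombdef, aeval_X, Sum.elim_inl]
  have hcombX2 : ∀ t, combine (X (Sum.inr t)) =
      rename (Sum.inr : Finset (Fin p) → _) (psiG K p (Tside T v u) (X t)) := by
    intro t; rw [hcombdef, aeval_X, Sum.elim_inr]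
  set H : MvPolynomial (↥(imsets p T)) K →ₐ[K]
      MvPolynomial ((Finset (Fin p)) ⊕ (Finset (Fin p))) K := combine.comp F with hHdef
  -- exponent data
  set w2 : ↥(imsets p T) → ((Finset (Fin p)) ⊕ (Finset (Fin p))) →₀ ℕ :=
    fun c => (wG p (Tside T u v) (π c).1.1).mapDomain Sum.inl
      + (wG p (Tside T v u) (π c).1.2).mapDomain Sum.inr with hw2def
  have hHX : ∀ c, H (X c) = monomial (w2 c) 1 := by
    intro c
    rw [hHdef, AlgHom.comp_apply, hFX, map_mul, hcombX1, hcombX2,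
      psiG_X, psiG_X, rename_monomial, rename_monomial, monomial_mul, one_mul, hw2def]
  have hwH : ∀ d, H (monomial d 1) = monomial (expHom w2 d) 1 :=
    algHom_monomial_exp H w2 hHX
  have hwT : ∀ d, psiG K p T (monomial d 1) = monomial (expHom (wG p T) d) 1 :=
    algHom_monomial_exp _ (wG p T) (psiG_X K p T)
  have hwU : ∀ d, psiG K p (Tside T u v) (monomial d 1) =
      monomial (expHom (wG p (Tside T u v)) d) 1 :=
    algHom_monomial_exp _ _ (psiG_X K p (Tside T u v))
  have hwV : ∀ d, psiG K p (Tside T v u) (monomial d 1) =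
      monomial (expHom (wG p (Tside T v u)) d) 1 :=
    algHom_monomial_exp _ _ (psiG_X K p (Tside T v u))
  -- single-variable exponent identities
  have keyU : ∀ c, MuHom T u v (wG p T c) = wG p (Tside T u v) (π c).1.1 := by
    intro c
    obtain ⟨D, hsk, hc1, h1, h2⟩ := hdata c
    rw [wG, wG, hc1, h1]
    exact MuHom_wF hT huv hsk
  have keyV : ∀ c, MuHom T v u (wG p T c) = wG p (Tside T v u) (π c).1.2 := by
    intro c
    obtain ⟨D, hsk, hc1, h1, h2⟩ := hdata c
    rw [wG, wG, hc1, h2]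
    exact MuHom_wF hT huv' hsk
  have keyM : ∀ c, MprimeHom u v (w2 c) = wG p T c := by
    intro c
    obtain ⟨D, hsk, hc1, h1, h2⟩ := hdata c
    show MprimeHom u v ((wG p (Tside T u v) (π c).1.1).mapDomain Sum.inl
      + (wG p (Tside T v u) (π c).1.2).mapDomain Sum.inr) = wG p T c
    rw [wG, wG, wG, hc1, h1, h2]
    exact Mprime_w2 hT huv hsk
  -- hom-level identities
  set alpha : ((↥(imsets p T)) →₀ ℕ) →+ ((↥(imsets p (Tside T u v))) →₀ ℕ) :=
    expHom (fun c => Finsupp.single (π c).1.1 1) with halphadef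
  set beta : ((↥(imsets p T)) →₀ ℕ) →+ ((↥(imsets p (Tside T v u))) →₀ ℕ) :=
    expHom (fun c => Finsupp.single (π c).1.2 1) with hbetadef
  have hMu : (MuHom T u v).comp (expHom (wG p T)) =
      (expHom (wG p (Tside T u v))).comp alpha := by
    rw [expHom_comp, halphadef, expHom_comp]
    congr 1
    funext c
    rw [keyU c, expHom_single, one_nsmul]
  have hMv : (MuHom T v u).comp (expHom (wG p T)) =
      (expHom (wG p (Tside T v u))).comp beta := by
    rw [expHom_comp, hbetadef, expHom_comp]
    congr 1
    funext c
    rw [keyV c, expHom_single, one_nsmul]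
  have hMp : (MprimeHom u v).comp (expHom w2) = expHom (wG p T) := by
    rw [expHom_comp]
    congr 1
    funext c
    exact keyM c
  -- F on monomials
  have hFmono : ∀ d : (↥(imsets p T)) →₀ ℕ, F (monomial d (1:K)) =
      rename Sum.inl (monomial (alpha d) (1:K)) * rename Sum.inr (monomial (beta d) 1) := by
    intro d
    have hXF : ∀ c, F (X c) = monomial
        (Finsupp.single (Sum.inl (π c).1.1) 1 + Finsupp.single (Sum.inr (π c).1.2) 1) (1:K) := by
      intro c
      rw [hFX, ← pow_one (X (Sum.inl (π c).1.1)), ← pow_one (X (Sum.inr (π c).1.2)),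
        X_pow_eq_monomial, X_pow_eq_monomial, monomial_mul, one_mul]
    rw [algHom_monomial_exp F _ hXF d, rename_monomial, rename_monomial, monomial_mul, one_mul]
    congr 1
    have hsum : ((Finsupp.mapDomain.addMonoidHom Sum.inl).comp alpha +
        (Finsupp.mapDomain.addMonoidHom Sum.inr).comp beta) =
        expHom (fun c => Finsupp.single (Sum.inl (π c).1.1) 1
          + Finsupp.single (Sum.inr (π c).1.2) 1) := by
      apply Finsupp.addHom_ext
      intro c n
      simp only [AddMonoidHom.add_apply, AddMonoidHom.coe_comp, Function.comp_apply,
        halphadef, hbetadef, expHom_single, Finsupp.mapDomain.addMonoidHom_apply,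
        smul_add, Finsupp.smul_single, smul_eq_mul, mul_one, Finsupp.mapDomain_single]
    rw [← hsum]
    rfl
  -- the statement
  apply le_antisymm
  · -- I_T ≤ comap
    intro f hf
    have hf0 : psiG K p T f = 0 := by
      rw [cimIdeal] at hf; exact RingHom.mem_ker.mp hf
    have hspan := span_binomials (psiG K p T) (fun d => expHom (wG p T) d) hwT hf0
    rw [QIG, Ideal.mem_comap, Ideal.mem_comap]
    have hmem : F f ∈ Ideal.map (rename (Sum.inl : _ → _ ⊕ _)) (cimIdeal K p (Tside T u v))
        + Ideal.map (rename Sum.inr) (cimIdeal K p (Tside T v u)) := by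
      have hle : Submodule.span K {g : MvPolynomial (↥(imsets p T)) K |
          ∃ a b, expHom (wG p T) a = expHom (wG p T) b ∧
            g = monomial a (1:K) - monomial b 1} ≤
          Submodule.comap F.toLinearMap
            (Submodule.restrictScalars K
              (Ideal.map (rename (Sum.inl : _ → _ ⊕ _)) (cimIdeal K p (Tside T u v))
                + Ideal.map (rename Sum.inr) (cimIdeal K p (Tside T v u)))) := by
        rw [Submodule.span_le]
        rintro g ⟨a, b, hab, rfl⟩
        simp only [SetLike.mem_coe, Submodule.mem_comap, AlgHom.toLinearMap_apply,
          Submodule.restrictScalars_mem]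
        have hA : monomial (alpha a) (1:K) - monomial (alpha b) 1
            ∈ cimIdeal K p (Tside T u v) := by
          rw [cimIdeal, RingHom.mem_ker, map_sub, hwU, hwU]
          have : expHom (wG p (Tside T u v)) (alpha a) =
              expHom (wG p (Tside T u v)) (alpha b) := by
            have h1 := DFunLike.congr_fun hMu a
            have h2 := DFunLike.congr_fun hMu b
            simp only [AddMonoidHom.coe_comp, Function.comp_apply] at h1 h2
            rw [← h1, ← h2]
            exact congrArg _ hab
          rw [this, sub_self]
        have hB : monomial (beta a) (1:K) - monomial (beta b) 1
            ∈ cimIdeal K p (Tside T v u) := by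
          rw [cimIdeal, RingHom.mem_ker, map_sub, hwV, hwV]
          have : expHom (wG p (Tside T v u)) (beta a) =
              expHom (wG p (Tside T v u)) (beta b) := by
            have h1 := DFunLike.congr_fun hMv a
            have h2 := DFunLike.congr_fun hMv b
            simp only [AddMonoidHom.coe_comp, Function.comp_apply] at h1 h2
            rw [← h1, ← h2]
            exact congrArg _ hab
          rw [this, sub_self]
        have hsplit : F (monomial a (1:K) - monomial b 1) =
            (rename Sum.inl (monomial (alpha a) (1:K) - monomial (alpha b) 1))
              * rename Sum.inr (monomial (beta a) 1)
            + rename Sum.inl (monomial (alpha b) 1)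
              * (rename Sum.inr (monomial (beta a) (1:K) - monomial (beta b) 1)) := by
          rw [map_sub, hFmono a, hFmono b, map_sub, map_sub]
          ring
        rw [hsplit, Submodule.add_eq_sup]
        refine Submodule.add_mem _ ?_ ?_
        · exact Submodule.mem_sup_left
            (Ideal.mul_mem_right _ _ (Ideal.mem_map_of_mem _ hA))
        · exact Submodule.mem_sup_right
            (Ideal.mul_mem_left _ _ (Ideal.mem_map_of_mem _ hB))
      have := hle hspan
      simpa only [Submodule.mem_comap, AlgHom.toLinearMap_apply,
        Submodule.restrictScalars_mem] using this
    exact hmem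
  · -- comap ≤ I_T
    intro f hf
    rw [QIG, Ideal.mem_comap, Ideal.mem_comap] at hf
    have hkerc : Ideal.map (rename (Sum.inl : _ → _ ⊕ _)) (cimIdeal K p (Tside T u v))
        + Ideal.map (rename Sum.inr) (cimIdeal K p (Tside T v u)) ≤
        RingHom.ker combine := by
      rw [Submodule.add_eq_sup]
      refine sup_le ?_ ?_
      · rw [Ideal.map_le_iff_le_comap]
        intro x hx
        rw [cimIdeal, RingHom.mem_ker] at hx
        rw [Ideal.mem_comap, RingHom.mem_ker]
        have hcomp : combine.comp (rename (Sum.inl : _ → _ ⊕ _)) =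
            (rename (Sum.inl : _ → _ ⊕ _)).comp (psiG K p (Tside T u v)) := by
          apply MvPolynomial.algHom_ext
          intro s
          rw [AlgHom.comp_apply, AlgHom.comp_apply, rename_X, hcombX1]
        have := DFunLike.congr_fun hcomp x
        simp only [AlgHom.comp_apply] at this
        rw [this, hx, map_zero]
      · rw [Ideal.map_le_iff_le_comap]
        intro x hx
        rw [cimIdeal, RingHom.mem_ker] at hx
        rw [Ideal.mem_comap, RingHom.mem_ker]
        have hcomp : combine.comp (rename (Sum.inr : _ → _ ⊕ _)) =
            (rename (Sum.inr : _ → _ ⊕ _)).comp (psiG K p (Tside T v u)) := by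
          apply MvPolynomial.algHom_ext
          intro t
          rw [AlgHom.comp_apply, AlgHom.comp_apply, rename_X, hcombX2]
        have := DFunLike.congr_fun hcomp x
        simp only [AlgHom.comp_apply] at this
        rw [this, hx, map_zero]
    have hHf : H f = 0 := by
      have : combine (F f) = 0 := RingHom.mem_ker.mp (hkerc hf)
      rw [hHdef]; exact this
    rw [cimIdeal, RingHom.mem_ker]
    refine ker_le_ker H (psiG K p T) (fun d => expHom w2 d) (fun d => expHom (wG p T) d)
      hwH hwT ?_ hHf
    intro a b hab
    beta_reduce at hab ⊢
    have h1 := DFunLike.congr_fun hMp a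
    have h2 := DFunLike.congr_fun hMp b
    simp only [AddMonoidHom.coe_comp, Function.comp_apply] at h1 h2
    rw [← h1, ← h2]
    exact congrArg _ hab
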